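/- arXiv:1710.08775 — 2 statements merged into one kernel-verified Lean document; each statement's English description precedes it below -/
import Mathlib

section
/- σ-separation in a HEDG is stable under marginalization: for a HEDG G=(V,E,H) and subsets W,X,Y,Z ⊆ V with (X∪Y∪Z) ∩ W = ∅, X ⟂_G^σ Y | Z if and only if X ⟂_{G^{marg∖W}}^σ Y | Z. -/
namespace HedgPaper

variable {V : Type*}

/-- directed reachability: existence of a directed path (possibly trivial). -/
def Reach (E : V → V → Prop) : V → V → Prop := Relation.ReflTransGen E

/-- `v` and `w` lie in the same strongly connected component. -/
def InSC (E : V → V → Prop) (v w : V) : Prop := Reach E v w ∧ Reach E w v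

/-- the set of ancestors of a set `Z`. -/
def AncSet (E : V → V → Prop) (Z : Set V) : Set V := {v | ∃ z ∈ Z, Reach E v z}

/-- `H` is a simplicial complex over `V`. -/
def IsSimplicial (H : Set (Set V)) : Prop :=
  (∀ v : V, ({v} : Set V) ∈ H) ∧ ∀ F ∈ H, ∀ F' : Set V, F' ⊆ F → F' ∈ H

/-- direction of an edge on a path: forward, backward, or bidirected. -/
inductive EDir : Type
  | fwd | bwd | bi

/-- one step of a walk in a HEDG. -/
structure Step (V : Type*) where
  src : V
  dir : EDir
  dst : V

/-- the step is an actual (directed or bidirected) edge of the HEDG `(V,E,H)`. -/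
def Step.Valid (E : V → V → Prop) (H : Set (Set V)) (s : Step V) : Prop :=
  match s.dir with
  | .fwd => E s.src s.dst
  | .bwd => E s.dst s.src
  | .bi  => s.src ≠ s.dst ∧ ({s.src, s.dst} : Set V) ∈ H

/-- the step has an arrowhead at its destination. -/
def Step.HeadAtDst (s : Step V) : Prop := s.dir = EDir.fwd ∨ s.dir = EDir.bi

/-- the step has an arrowhead at its source. -/
def Step.HeadAtSrc (s : Step V) : Prop := s.dir = EDir.bwd ∨ s.dir = EDir.bi

/-- `l` is a walk (path, possibly with repeated nodes) from `x` to `y` in `(V,E,H)`. -/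
def IsWalk (E : V → V → Prop) (H : Set (Set V)) : List (Step V) → V → V → Prop
  | [], x, y => x = y
  | s :: l, x, y => s.src = x ∧ s.Valid E H ∧ IsWalk E H l s.dst y

/-- all interior nodes of the walk are `Z`-open in the d-separation sense:
colliders are ancestors of `Z`, non-colliders are not in `Z`. -/
def DInteriorOpen (E : V → V → Prop) (Z : Set V) : List (Step V) → Prop
  | [] => True
  | [_] => True
  | s :: t :: l =>
      ((s.HeadAtDst ∧ t.HeadAtSrc) → s.dst ∈ AncSet E Z) ∧
      (¬ (s.HeadAtDst ∧ t.HeadAtSrc) → s.dst ∉ Z) ∧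
      DInteriorOpen E Z (t :: l)

/-- `X` is d-separated from `Y` given `Z` in the HEDG `(V,E,H)`:
every walk from `X` to `Y` is `Z`-blocked. -/
def DSep (E : V → V → Prop) (H : Set (Set V)) (X Y Z : Set V) : Prop :=
  ∀ x ∈ X, ∀ y ∈ Y, ∀ l : List (Step V),
    IsWalk E H l x y → ¬ (x ∉ Z ∧ y ∉ Z ∧ DInteriorOpen E Z l)

/-- all interior nodes of the walk are `Z`-σ-open: colliders are ancestors of `Z`,
and a non-collider in `Z` must not point (via a directed edge of the path) to a
node outside of its strongly connected component. -/
def SigmaInteriorOpen (E : V → V → Prop) (Z : Set V) : List (Step V) → Prop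
  | [] => True
  | [_] => True
  | s :: t :: l =>
      ((s.HeadAtDst ∧ t.HeadAtSrc) → s.dst ∈ AncSet E Z) ∧
      (¬ (s.HeadAtDst ∧ t.HeadAtSrc) →
        ¬ (s.dst ∈ Z ∧ ((¬ s.HeadAtDst ∧ ¬ InSC E s.dst s.src) ∨
                        (¬ t.HeadAtSrc ∧ ¬ InSC E s.dst t.dst)))) ∧
      SigmaInteriorOpen E Z (t :: l)

/-- `X` is σ-separated from `Y` given `Z` in the HEDG `(V,E,H)`. -/
def SigmaSep (E : V → V → Prop) (H : Set (Set V)) (X Y Z : Set V) : Prop :=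
  ∀ x ∈ X, ∀ y ∈ Y, ∀ l : List (Step V),
    IsWalk E H l x y → ¬ (x ∉ Z ∧ y ∉ Z ∧ SigmaInteriorOpen E Z l)

/-- directed edges of the marginalization of `(V,E,H)` w.r.t. (i.e. after removing) `U`:
`a → b` iff there is a directed path `a → u₁ → ⋯ → u_r → b` in `G` with all `uᵢ ∈ U`. -/
def MargE (E : V → V → Prop) (U : Set V) : V → V → Prop :=
  fun a b => a ∉ U ∧ b ∉ U ∧
    ∃ c, Relation.ReflTransGen (fun x y => E x y ∧ y ∈ U) a c ∧ E c b

/-- hyperedges of the marginalization of `(V,E,H)` w.r.t. `U`. -/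
def MargH (E : V → V → Prop) (H : Set (Set V)) (U : Set V) : Set (Set V) :=
  {F' | (∀ v ∈ F', v ∉ U) ∧ ∃ F ∈ H, F ⊆ F' ∪ U ∧
    ∀ v ∈ F', (v ∈ F ∧ v ∉ U) ∨
      ∃ u ∈ F ∩ U, ∃ c, Relation.ReflTransGen (fun x y => E x y ∧ y ∈ U) u c ∧ E c v}

/-- bidirected-edge relation induced by the hyperedges. -/
def BiRel (H : Set (Set V)) : V → V → Prop :=
  fun x y => x ≠ y ∧ ({x, y} : Set V) ∈ H

/-- (generalized) moralization of a HEDG: `v — w` iff there are `a`, `b` with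
`v ∈ {a} ∪ Pa(a)`, `w ∈ {b} ∪ Pa(b)` and a bidirected chain `a ↔ ⋯ ↔ b`. -/
def MoralE (E : V → V → Prop) (H : Set (Set V)) : V → V → Prop :=
  fun v w => v ≠ w ∧ ∃ a b, (v = a ∨ E v a) ∧ (w = b ∨ E w b) ∧
    Relation.ReflTransGen (BiRel H) a b

/-- moralization of a directed graph: undirected versions of the directed edges plus
edges between distinct parents of a common child. -/
def MoralDirE (E : V → V → Prop) : V → V → Prop :=
  fun v w => v ≠ w ∧ (E v w ∨ E w v ∨ ∃ c, E v c ∧ E w c)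

/-- marginalization of an undirected graph `A` w.r.t. `W`: `a — b` iff there is a path
from `a` to `b` with all intermediate nodes in `W`. -/
def MargUnd (A : V → V → Prop) (W : Set V) : V → V → Prop :=
  fun a b => a ∉ W ∧ b ∉ W ∧ a ≠ b ∧
    ∃ c, Relation.ReflTransGen (fun x y => A x y ∧ y ∈ W) a c ∧ A c b

/-- separation in an undirected graph: every path from `X` to `Y` contains a node of
`Z` (including the endnodes). -/
def USep (A : V → V → Prop) (X Y Z : Set V) : Prop :=
  ∀ x ∈ X, ∀ y ∈ Y,
    ¬ (x ∉ Z ∧ Relation.ReflTransGen (fun a b => A a b ∧ b ∉ Z) x y)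

/-- edges of the induced sub-HEDG on `A`. -/
def InducedE (E : V → V → Prop) (A : Set V) : V → V → Prop :=
  fun a b => a ∈ A ∧ b ∈ A ∧ E a b

/-- hyperedges of the induced sub-HEDG on `A`. -/
def InducedH (H : Set (Set V)) (A : Set V) : Set (Set V) := {F | F ∈ H ∧ F ⊆ A}

/-- `F` is an inclusion-maximal hyperedge of `H`. -/
def MaximalHyperedge (H : Set (Set V)) (F : Set V) : Prop :=
  F ∈ H ∧ ∀ F' ∈ H, F ⊆ F' → F' = F

/-- edges of the augmented directed graph of a HEDG: the original directed edges plus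
`e_F → v` for every maximal hyperedge `F` and every `v ∈ F`. -/
def AugE (E : V → V → Prop) (H : Set (Set V)) :
    V ⊕ {F : Set V // MaximalHyperedge H F} →
    V ⊕ {F : Set V // MaximalHyperedge H F} → Prop
  | .inl v, .inl w => E v w
  | .inr F, .inl v => v ∈ F.1
  | _, _ => False

/-- the trivial simplicial complex (only subsingleton hyperedges), making a directed
graph a HEDG without bidirected edges. -/
def TrivialH (W : Type*) : Set (Set W) := {F | Set.Subsingleton F}

/-- directed edges of the acyclification of a HEDG. -/
def AcyE (E : V → V → Prop) : V → V → Prop :=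
  fun v w => ¬ InSC E v w ∧ ∃ w', InSC E w w' ∧ E v w'

/-- hyperedges of the acyclification of a HEDG. -/
def AcyH (E : V → V → Prop) (H : Set (Set V)) : Set (Set V) :=
  {F' | ∃ F ∈ H, ∀ x ∈ F', ∃ v ∈ F, InSC E v x}

/-!
Every edge of the marginalization comes from a directed path `a → ⋯ → b` or a collider-free
trek `a ← ⋯ ↔ ⋯ → b` through `W`. Splicing these in turns a σ-open walk of the marginalization
into one of `G`: the new nodes lie in `W`, so they are non-colliders outside `Z`, and the marks and
strongly connected components of the old nodes do not change.

Conversely, a σ-open walk of `G` between nodes outside `W` is first freed of colliders in `W`: such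
a collider is an ancestor of `Z` outside `Z`, so it can be replaced by a detour down to the first
node of `Z` and back. Then every maximal segment through `W` is a directed path, a reversed one, or
a trek with arrowheads at both ends, and becomes a single marginal edge, or is dropped if it is a
loop `a ← ⋯ → a`. The one subtle case is a directed segment `a → n → ⋯ → c` with `a ∈ Z` and `n`,
but not `c`, in the strongly connected component of `a`: the edge `a → c` would be blocked at `a`,
so the marginal walk takes `a → q ↔ c` instead.
-/

lemma isChain_and {α : Type*} {R S : α → α → Prop} {l : List α} (hR : l.IsChain R)
    (hS : l.IsChain S) : l.IsChain (fun a b => R a b ∧ S a b) :=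
  List.isChain_iff_forall_rel_of_append_cons_cons.2 fun _ _ _ _ h =>
    ⟨List.isChain_iff_forall_rel_of_append_cons_cons.1 hR h,
      List.isChain_iff_forall_rel_of_append_cons_cons.1 hS h⟩

def EDir.flip : EDir → EDir
  | .fwd => .bwd
  | .bwd => .fwd
  | .bi => .bi

namespace Step

def flip (s : Step V) : Step V := ⟨s.dst, s.dir.flip, s.src⟩

@[simp] lemma flip_dst (s : Step V) : s.flip.dst = s.src := rfl

@[simp] lemma flip_flip (s : Step V) : s.flip.flip = s := by
  obtain ⟨a, d, b⟩ := s
  cases d <;> rfl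

@[simp] lemma headAtSrc_flip (s : Step V) : s.flip.HeadAtSrc ↔ s.HeadAtDst := by
  obtain ⟨a, d, b⟩ := s
  cases d <;> simp [flip, EDir.flip, HeadAtSrc, HeadAtDst]

@[simp] lemma headAtDst_flip (s : Step V) : s.flip.HeadAtDst ↔ s.HeadAtSrc := by
  simpa using (headAtSrc_flip s.flip).symm

lemma not_headAtSrc_iff {s : Step V} : ¬ s.HeadAtSrc ↔ s.dir = .fwd := by
  obtain ⟨a, d, b⟩ := s
  cases d <;> simp [HeadAtSrc]

lemma not_headAtDst_iff {s : Step V} : ¬ s.HeadAtDst ↔ s.dir = .bwd := by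
  obtain ⟨a, d, b⟩ := s
  cases d <;> simp [HeadAtDst]

lemma headAtDst_of_dir_fwd {s : Step V} (h : s.dir = .fwd) : s.HeadAtDst := Or.inl h

lemma headAtSrc_of_dir_bwd {s : Step V} (h : s.dir = .bwd) : s.HeadAtSrc := Or.inl h

lemma flip_dir_fwd {s : Step V} : s.flip.dir = .fwd ↔ s.dir = .bwd := by
  obtain ⟨a, d, b⟩ := s
  cases d <;> simp [flip, EDir.flip]

lemma flip_dir_bwd {s : Step V} : s.flip.dir = .bwd ↔ s.dir = .fwd := by
  obtain ⟨a, d, b⟩ := s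
  cases d <;> simp [flip, EDir.flip]

variable {E : V → V → Prop} {H : Set (Set V)}

lemma Valid.flip {s : Step V} (h : s.Valid E H) : s.flip.Valid E H := by
  obtain ⟨a, d, b⟩ := s
  cases d
  · exact h
  · exact h
  · exact ⟨h.1.symm, Set.pair_comm a b ▸ h.2⟩

lemma Valid.rel_of_dir_fwd {s : Step V} (h : s.Valid E H) (hd : s.dir = .fwd) :
    E s.src s.dst := by
  unfold Valid at h; rwa [hd] at h

end Step

section Walk

variable {E : V → V → Prop} {H : Set (Set V)}

@[simp] lemma isWalk_nil {a b : V} : IsWalk E H [] a b ↔ a = b := Iff.rfl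

lemma isWalk_append {l₁ l₂ : List (Step V)} {a b : V} :
    IsWalk E H (l₁ ++ l₂) a b ↔ ∃ c, IsWalk E H l₁ a c ∧ IsWalk E H l₂ c b := by
  induction l₁ generalizing a with
  | nil => simp
  | cons s l ih =>
    simp only [List.cons_append, IsWalk, ih]
    exact ⟨fun ⟨h₁, h₂, c, h₃, h₄⟩ => ⟨c, ⟨h₁, h₂, h₃⟩, h₄⟩,
      fun ⟨c, ⟨h₁, h₂, h₃⟩, h₄⟩ => ⟨h₁, h₂, c, h₃, h₄⟩⟩

lemma IsWalk.append {l₁ l₂ : List (Step V)} {a b c : V} (h₁ : IsWalk E H l₁ a b)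
    (h₂ : IsWalk E H l₂ b c) : IsWalk E H (l₁ ++ l₂) a c :=
  isWalk_append.2 ⟨b, h₁, h₂⟩

lemma IsWalk.src_of_mem_head? {l : List (Step V)} {a b : V} (h : IsWalk E H l a b) {s : Step V}
    (hs : s ∈ l.head?) : s.src = a := by
  cases l with
  | nil => simp at hs
  | cons t l => simp only [List.head?_cons, Option.mem_def, Option.some.injEq] at hs; exact hs ▸ h.1

lemma IsWalk.dst_of_mem_getLast? {l : List (Step V)} {a b : V} (h : IsWalk E H l a b)
    {s : Step V} (hs : s ∈ l.getLast?) : s.dst = b := by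
  obtain ⟨l₀, rfl⟩ := List.getLast?_eq_some_iff.1 hs
  obtain ⟨c, -, -, -, hc⟩ := isWalk_append.1 h
  exact hc

lemma IsWalk.isChain_imp {l : List (Step V)} {a b : V} (h : IsWalk E H l a b)
    {R R' : Step V → Step V → Prop} (hR : l.IsChain R)
    (hRR' : ∀ s t, s.dst = t.src → R s t → R' s t) :
    l.IsChain R' := by
  induction l generalizing a with
  | nil => exact .nil
  | cons s l ih =>
    refine (ih h.2.2 (List.isChain_cons.1 hR).2).cons fun t ht => ?_
    exact hRR' s t (h.2.2.src_of_mem_head? ht).symm ((List.isChain_cons.1 hR).1 t ht)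

def reverseWalk (l : List (Step V)) : List (Step V) := (l.map Step.flip).reverse

@[simp] lemma reverseWalk_nil : reverseWalk ([] : List (Step V)) = [] := rfl

@[simp] lemma reverseWalk_eq_nil {l : List (Step V)} : reverseWalk l = [] ↔ l = [] := by
  simp [reverseWalk]

@[simp] lemma reverseWalk_reverseWalk (l : List (Step V)) : reverseWalk (reverseWalk l) = l := by
  simp [reverseWalk, Function.comp_def]

@[simp] lemma mem_reverseWalk {l : List (Step V)} {s : Step V} :
    s ∈ reverseWalk l ↔ s.flip ∈ l := by
  simp only [reverseWalk, List.mem_reverse, List.mem_map]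
  exact ⟨by rintro ⟨t, ht, rfl⟩; simpa, fun h => ⟨s.flip, h, by simp⟩⟩

@[simp] lemma head?_reverseWalk (l : List (Step V)) :
    (reverseWalk l).head? = l.getLast?.map Step.flip := by
  simp [reverseWalk, List.getLast?_map]

@[simp] lemma getLast?_reverseWalk (l : List (Step V)) :
    (reverseWalk l).getLast? = l.head?.map Step.flip := by
  simp [reverseWalk]

lemma IsWalk.reverse {l : List (Step V)} {a b : V} (h : IsWalk E H l a b) :
    IsWalk E H (reverseWalk l) b a := by
  induction l generalizing a with
  | nil => exact h.symm
  | cons s l ih =>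
    simp only [reverseWalk, List.map_cons, List.reverse_cons] at ih ⊢
    exact (ih h.2.2).append ⟨rfl, h.2.1.flip, h.1⟩

lemma IsWalk.isChain_reverse {l : List (Step V)} {a b : V} (h : IsWalk E H l a b)
    {R R' : Step V → Step V → Prop} (hR : l.IsChain R)
    (hRR' : ∀ s t, s.dst = t.src → R s t → R' t.flip s.flip) :
    (reverseWalk l).IsChain R' := by
  rw [reverseWalk, List.isChain_reverse, List.isChain_map]
  exact h.isChain_imp hR hRR'

end Walk

section SigmaOpen

variable {R R' : V → V → Prop} {Z : Set V}

def IsCollider (s t : Step V) : Prop := s.HeadAtDst ∧ t.HeadAtSrc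

def TailCond (R : V → V → Prop) (Z : Set V) (c : V) (t : Step V) : Prop :=
  c ∈ Z → ¬ t.HeadAtSrc → InSC R c t.dst

/-- The condition of `SigmaInteriorOpen` at the node between consecutive steps `s` and `t`, split
into the collider part and one tail condition per side, so that each side can be swapped for a
step with the same mark. -/
def SigmaOpenAt (R : V → V → Prop) (Z : Set V) (s t : Step V) : Prop :=
  (IsCollider s t → s.dst ∈ AncSet R Z) ∧ TailCond R Z s.dst s.flip ∧ TailCond R Z s.dst t

lemma sigmaInteriorOpen_iff {l : List (Step V)} :
    SigmaInteriorOpen R Z l ↔ l.IsChain (SigmaOpenAt R Z) := by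
  match l with
  | [] => simp [SigmaInteriorOpen]
  | [s] => simp [SigmaInteriorOpen]
  | s :: t :: l =>
    rw [SigmaInteriorOpen, List.isChain_cons_cons, ← sigmaInteriorOpen_iff, ← and_assoc]
    refine and_congr_left' ?_
    simp only [SigmaOpenAt, IsCollider, TailCond, Step.flip_dst, Step.headAtSrc_flip]
    tauto

lemma sigmaOpenAt_of_not_mem {s t : Step V} (hs : s.dst ∉ Z) (hst : ¬ IsCollider s t) :
    SigmaOpenAt R Z s t :=
  ⟨fun h => absurd h hst, fun h => absurd h hs, fun h => absurd h hs⟩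

lemma sigmaOpenAt_flip_self {s : Step V} (hs : s.HeadAtDst) (hanc : s.dst ∈ AncSet R Z) :
    SigmaOpenAt R Z s s.flip :=
  ⟨fun _ => hanc, fun _ h => absurd (by simpa using hs) h, fun _ h => absurd (by simpa using hs) h⟩

lemma SigmaOpenAt.flip {s t : Step V} (hst : s.dst = t.src) (h : SigmaOpenAt R Z s t) :
    SigmaOpenAt R Z t.flip s.flip := by
  obtain ⟨h₁, h₂, h₃⟩ := h
  simp only [SigmaOpenAt, IsCollider, Step.flip_dst, Step.flip_flip, Step.headAtDst_flip,
    Step.headAtSrc_flip, ← hst] at h₁ ⊢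
  exact ⟨fun hc => h₁ hc.symm, h₃, h₂⟩

lemma IsWalk.isChain_sigmaOpenAt_reverse {E : V → V → Prop} {H : Set (Set V)}
    {l : List (Step V)} {a b : V} (hl : IsWalk E H l a b) (h : l.IsChain (SigmaOpenAt R Z)) :
    (reverseWalk l).IsChain (SigmaOpenAt R Z) :=
  hl.isChain_reverse h fun _ _ hst h => h.flip hst

def SameStart (R R' : V → V → Prop) (Z : Set V) (c : V) (t t' : Step V) : Prop :=
  (t'.HeadAtSrc ↔ t.HeadAtSrc) ∧ (TailCond R Z c t → TailCond R' Z c t')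

lemma sameStart_of_headAtSrc {c : V} {t t' : Step V} (ht : t.HeadAtSrc) (ht' : t'.HeadAtSrc) :
    SameStart R R' Z c t t' :=
  ⟨iff_of_true ht' ht, fun _ _ h => absurd ht' h⟩

lemma sameStart_flip_of_headAtDst {c : V} {e e' : Step V} (he : e.HeadAtDst) (he' : e'.HeadAtDst) :
    SameStart R R' Z c e.flip e'.flip :=
  sameStart_of_headAtSrc ((Step.headAtSrc_flip e).2 he) ((Step.headAtSrc_flip e').2 he')

lemma SigmaOpenAt.transfer {e h e' h' : Step V} (hopen : SigmaOpenAt R Z e h)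
    (he : SameStart R R' Z e.dst e.flip e'.flip) (hh : SameStart R R' Z e.dst h h')
    (hanc : e.dst ∈ AncSet R Z → e.dst ∈ AncSet R' Z) (hdst : e'.dst = e.dst) :
    SigmaOpenAt R' Z e' h' := by
  have he₁ : e'.HeadAtDst ↔ e.HeadAtDst := by simpa using he.1
  rw [SigmaOpenAt, hdst]
  exact ⟨fun hc => hanc (hopen.1 ⟨he₁.1 hc.1, hh.1.1 hc.2⟩), he.2 hopen.2.1, hh.2 hopen.2.2⟩

/-- Deleting a closed subwalk that starts with an arrowhead keeps the walk σ-open. -/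
lemma SigmaOpenAt.skip {e t s t' : Step V} (h₁ : SigmaOpenAt R Z e t) (h₂ : SigmaOpenAt R Z s t')
    (ht : t.HeadAtSrc) (hes : e.dst = s.dst) : SigmaOpenAt R Z e t' :=
  ⟨fun hc => h₁.1 ⟨hc.1, ht⟩, h₁.2.1, hes ▸ h₂.2.2⟩

def Replaces (R R' : V → V → Prop) (Z : Set V) (a b : V) (l l' : List (Step V)) : Prop :=
  (∀ h' ∈ l'.head?, ∃ h ∈ l.head?, SameStart R R' Z a h h') ∧
  ∀ e' ∈ l'.getLast?, ∃ e ∈ l.getLast?, SameStart R R' Z b e.flip e'.flip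

lemma Replaces.of_head?_getLast? {a b : V} {l l' : List (Step V)} {h' e' : Step V}
    (hh' : l'.head? = some h') (he' : l'.getLast? = some e')
    (hh : ∃ h ∈ l.head?, SameStart R R' Z a h h')
    (he : ∃ e ∈ l.getLast?, SameStart R R' Z b e.flip e'.flip) : Replaces R R' Z a b l l' :=
  ⟨fun _ hx => Option.some.inj (hh'.symm.trans hx) ▸ hh,
    fun _ hx => Option.some.inj (he'.symm.trans hx) ▸ he⟩

lemma Replaces.reverse {a b : V} {l l' : List (Step V)} (h : Replaces R R' Z a b l l') :
    Replaces R R' Z b a (reverseWalk l) (reverseWalk l') := by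
  simp only [Replaces, head?_reverseWalk, getLast?_reverseWalk, Option.mem_map]
  constructor
  · rintro _ ⟨e', he', rfl⟩
    obtain ⟨e, he, hs⟩ := h.2 e' he'
    exact ⟨e.flip, ⟨e, he, rfl⟩, hs⟩
  · rintro _ ⟨h', hh', rfl⟩
    obtain ⟨h₀, hh₀, hs⟩ := h.1 h' hh'
    exact ⟨h₀.flip, ⟨h₀, hh₀, rfl⟩, by simpa using hs⟩

end SigmaOpen

section Marginal

variable {E : V → V → Prop} {W S Z : Set V}

def WPath (E : V → V → Prop) (S : Set V) (u v : V) : Prop :=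
  ∃ c, Relation.ReflTransGen (fun x y => E x y ∧ y ∈ S) u c ∧ E c v

lemma WPath.single {u v : V} (h : E u v) : WPath E S u v := ⟨u, .refl, h⟩

lemma WPath.head {u w v : V} (huw : E u w) (hw : w ∈ S) (h : WPath E S w v) : WPath E S u v :=
  let ⟨c, hc, hcv⟩ := h
  ⟨c, .head ⟨huw, hw⟩ hc, hcv⟩

lemma WPath.reach {u v : V} (h : WPath E S u v) : Reach E u v :=
  let ⟨_, hc, hcv⟩ := h
  (Relation.ReflTransGen.mono (fun _ _ h => h.1) _ _ hc).tail hcv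

lemma exists_wPath_of_reach {u v : V} (hu : u ∈ S) (hv : v ∉ S) (h : Reach E u v) :
    ∃ q ∉ S, WPath E S u q ∧ Reach E q v := by
  induction h using Relation.ReflTransGen.head_induction_on with
  | refl => exact absurd hu hv
  | @head u w huw hwv ih =>
    by_cases hw : w ∈ S
    · obtain ⟨q, hq, hwq, hqv⟩ := ih hw
      exact ⟨q, hq, hwq.head huw hw, hqv⟩
    · exact ⟨w, hw, .single huw, hwv⟩

lemma Reach.of_margE {a b : V} (h : Reach (MargE E W) a b) : Reach E a b :=
  Relation.ReflTransGen.lift' id (fun _ _ (hab : MargE E W _ _) => WPath.reach hab.2.2) _ _ h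

lemma Reach.margE {a b : V} (ha : a ∉ W) (hb : b ∉ W) (h : Reach E a b) :
    Reach (MargE E W) a b := by
  suffices ∀ c, Reach E a c → ∃ d ∉ W, Reach (MargE E W) a d ∧
      Relation.ReflTransGen (fun x y => E x y ∧ y ∈ W) d c by
    obtain ⟨d, -, had, hdb⟩ := this b h
    rcases hdb.cases_tail with rfl | ⟨_, -, -, hb'⟩
    · exact had
    · exact absurd hb' hb
  intro c hc
  induction hc with
  | refl => exact ⟨a, ha, .refl, .refl⟩
  | @tail c c' _ hcc' ih =>
    obtain ⟨d, hd, had, hdc⟩ := ih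
    by_cases hc' : c' ∈ W
    · exact ⟨d, hd, had, hdc.tail ⟨hcc', hc'⟩⟩
    · exact ⟨c', hc', had.tail ⟨hd, hc', c, hdc, hcc'⟩, .refl⟩

lemma inSC_margE_iff {a b : V} (ha : a ∉ W) (hb : b ∉ W) :
    InSC (MargE E W) a b ↔ InSC E a b :=
  ⟨fun h => ⟨h.1.of_margE, h.2.of_margE⟩, fun h => ⟨h.1.margE ha hb, h.2.margE hb ha⟩⟩

lemma ancSet_margE_subset : AncSet (MargE E W) Z ⊆ AncSet E Z :=
  fun _ ⟨z, hz, h⟩ => ⟨z, hz, h.of_margE⟩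

lemma mem_ancSet_margE (hWZ : ∀ w ∈ W, w ∉ Z) {a : V} (ha : a ∉ W) (h : a ∈ AncSet E Z) :
    a ∈ AncSet (MargE E W) Z :=
  let ⟨z, hz, haz⟩ := h
  ⟨z, hz, haz.margE ha fun hzW => hWZ z hzW hz⟩

end Marginal

section Treks

variable {E : V → V → Prop} {H : Set (Set V)} {W S : Set V}

def PassesThrough (S : Set V) (s t : Step V) : Prop := s.dst ∈ S ∧ ¬ IsCollider s t

lemma isChain_sigmaOpenAt_of_passesThrough {R : V → V → Prop} {Z : Set V}
    (hSZ : ∀ w ∈ S, w ∉ Z) {l : List (Step V)} (h : l.IsChain (PassesThrough S)) :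
    l.IsChain (SigmaOpenAt R Z) :=
  h.imp fun _ _ h => sigmaOpenAt_of_not_mem (hSZ _ h.1) h.2

lemma IsWalk.isChain_passesThrough_reverse {l : List (Step V)} {a b : V}
    (hl : IsWalk E H l a b) (h : l.IsChain (PassesThrough S)) :
    (reverseWalk l).IsChain (PassesThrough S) :=
  hl.isChain_reverse h fun _ _ hst h =>
    ⟨by simpa [hst] using h.1, fun hc => h.2 ⟨by simpa using hc.2, by simpa using hc.1⟩⟩

lemma forall_fwd_of_headAtDst {s : Step V} {l : List (Step V)}
    (h : (s :: l).IsChain (fun s t => ¬ IsCollider s t)) (hs : s.HeadAtDst) :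
    ∀ t ∈ l, t.dir = .fwd := by
  induction l generalizing s with
  | nil => simp
  | cons t l ih =>
    rw [List.isChain_cons_cons] at h
    have ht : t.dir = .fwd := Step.not_headAtSrc_iff.1 fun ht => h.1 ⟨hs, ht⟩
    exact List.forall_mem_cons.2 ⟨ht, ih h.2 (Step.headAtDst_of_dir_fwd ht)⟩

/-- `l` is a directed walk `u → w₁ → ⋯ → wₖ → v` with all `wᵢ ∈ S`. -/
def IsRun (S : Set V) (l : List (Step V)) : Prop :=
  (∀ s ∈ l, s.dir = .fwd) ∧ l.IsChain (fun s _ => s.dst ∈ S)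

lemma IsRun.isChain_passesThrough {l : List (Step V)} (h : IsRun S l) :
    l.IsChain (PassesThrough S) :=
  (List.IsChain.iff_mem.1 h.2).imp fun _ t ⟨_, ht, hs⟩ =>
    ⟨hs, fun hc => Step.not_headAtSrc_iff.2 (h.1 t ht) hc.2⟩

lemma IsRun.dir_of_mem_reverse {l : List (Step V)} (h : IsRun S l) {s : Step V}
    (hs : s ∈ reverseWalk l) : s.dir = .bwd :=
  Step.flip_dir_fwd.1 (h.1 _ (mem_reverseWalk.1 hs))

lemma isRun_of_isChain_passesThrough {l : List (Step V)} (h : l.IsChain (PassesThrough S))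
    (hhead : ∀ s ∈ l.head?, ¬ s.HeadAtSrc) : IsRun S l := by
  refine ⟨?_, h.imp fun _ _ h => h.1⟩
  cases l with
  | nil => simp
  | cons s l =>
    have hs : s.dir = .fwd := Step.not_headAtSrc_iff.1 (hhead s rfl)
    exact List.forall_mem_cons.2
      ⟨hs, forall_fwd_of_headAtDst (h.imp fun _ _ h => h.2) (Step.headAtDst_of_dir_fwd hs)⟩

lemma IsWalk.isRun_reverse {l : List (Step V)} {a b : V} (hl : IsWalk E H l a b)
    (hbwd : ∀ s ∈ l, s.dir = .bwd) (h : l.IsChain (fun s _ => s.dst ∈ S)) :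
    IsRun S (reverseWalk l) :=
  ⟨fun _ hs => Step.flip_dir_bwd.1 (hbwd _ (mem_reverseWalk.1 hs)),
    hl.isChain_reverse h fun _ _ hst h => by simpa [hst] using h⟩

lemma WPath.exists_run {u v : V} (h : WPath E S u v) :
    ∃ l ≠ [], IsWalk E H l u v ∧ IsRun S l := by
  obtain ⟨c, hc, hcv⟩ := h
  induction hc using Relation.ReflTransGen.head_induction_on with
  | refl => exact ⟨[⟨c, .fwd, v⟩], by simp, ⟨rfl, hcv, rfl⟩, by simp, .singleton _⟩
  | @head u w huw _ ih =>
    obtain ⟨l, -, hl, hfwd, hchain⟩ := ih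
    exact ⟨⟨u, .fwd, w⟩ :: l, by simp, ⟨rfl, huw.1, hl⟩, List.forall_mem_cons.2 ⟨rfl, hfwd⟩,
      hchain.cons fun _ _ => huw.2⟩

lemma IsRun.wPath {l : List (Step V)} {u v : V} (hl : IsWalk E H l u v) (hrun : IsRun S l)
    (hne : l ≠ []) : WPath E S u v := by
  induction l generalizing u with
  | nil => exact absurd rfl hne
  | cons s l ih =>
    obtain ⟨rfl, hs, hl⟩ := hl
    have hsE := hs.rel_of_dir_fwd (hrun.1 s (by simp))
    rcases l with _ | ⟨t, l⟩
    · exact .single (hl ▸ hsE)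
    · have hrun' : IsRun S (t :: l) := ⟨fun x hx => hrun.1 x (by simp [hx]), hrun.2.tail⟩
      exact (ih hl hrun' (by simp)).head hsE (List.isChain_cons_cons.1 hrun.2).1

lemma IsWalk.reach_of_forall_fwd {l : List (Step V)} {a b : V} (hl : IsWalk E H l a b)
    (hfwd : ∀ s ∈ l, s.dir = .fwd) : Reach E a b := by
  induction l generalizing a with
  | nil => exact hl ▸ .refl
  | cons s l ih =>
    obtain ⟨rfl, hs, hl⟩ := hl
    exact .head (hs.rel_of_dir_fwd (hfwd s (by simp))) (ih hl fun t ht => hfwd t (by simp [ht]))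

/-- `l` is a collider-free walk through `S` with arrowheads at both ends, i.e. of the form
`a ← ⋯ ← u ↔ u' → ⋯ → b` or `a ← ⋯ ← u → ⋯ → b`. -/
def IsBiTrek (S : Set V) (l : List (Step V)) : Prop :=
  l.IsChain (PassesThrough S) ∧ (∀ h ∈ l.head?, h.HeadAtSrc) ∧ ∀ e ∈ l.getLast?, e.HeadAtDst

lemma isRun_or_isRun_reverse_or_isBiTrek {l : List (Step V)} {a b : V} (hl : IsWalk E H l a b)
    (h : l.IsChain (PassesThrough S)) : IsRun S l ∨ IsRun S (reverseWalk l) ∨ IsBiTrek S l := by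
  by_cases hhead : ∀ s ∈ l.head?, s.HeadAtSrc
  · by_cases hlast : ∀ e ∈ l.getLast?, e.HeadAtDst
    · exact Or.inr (Or.inr ⟨h, hhead, hlast⟩)
    · push Not at hlast
      obtain ⟨e, he, he'⟩ := hlast
      refine Or.inr (Or.inl (isRun_of_isChain_passesThrough
        (hl.isChain_passesThrough_reverse h) ?_))
      rw [head?_reverseWalk, Option.mem_def.1 he]
      simpa using he'
  · push Not at hhead
    obtain ⟨s, hs, hs'⟩ := hhead
    exact Or.inl (isRun_of_isChain_passesThrough h fun t ht => Option.mem_unique hs ht ▸ hs')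

lemma exists_eq_append_of_isChain_not_isCollider {l : List (Step V)}
    (h : l.IsChain (fun s t => ¬ IsCollider s t)) (hne : l ≠ [])
    (hlast : ∀ e ∈ l.getLast?, e.HeadAtDst) :
    ∃ B t R, l = B ++ t :: R ∧ (∀ s ∈ B, s.dir = .bwd) ∧ t.HeadAtDst ∧ ∀ s ∈ R, s.dir = .fwd := by
  induction l with
  | nil => exact absurd rfl hne
  | cons s l ih =>
    by_cases hs : s.HeadAtDst
    · exact ⟨[], s, l, rfl, by simp, hs, forall_fwd_of_headAtDst h hs⟩
    · obtain ⟨t, l, rfl⟩ : ∃ t l', l = t :: l' :=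
        List.exists_cons_of_ne_nil fun hl => hs (hlast s (by simp [hl]))
      obtain ⟨B, t, R, heq, hB, ht, hR⟩ :=
        ih h.tail (by simp) (by simpa [List.getLast?_cons_cons] using hlast)
      exact ⟨s :: B, t, R, by rw [heq]; rfl,
        List.forall_mem_cons.2 ⟨Step.not_headAtDst_iff.1 hs, hB⟩, ht, hR⟩

end Treks

section MargH

variable {E : V → V → Prop} {H : Set (Set V)} {W : Set V}

def ReachedFrom (E : V → V → Prop) (W F : Set V) (v : V) : Prop :=
  v ∈ F ∨ ∃ u ∈ F ∩ W, WPath E W u v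

lemma pair_mem_margH_iff {a b : V} :
    ({a, b} : Set V) ∈ MargH E H W ↔
      a ∉ W ∧ b ∉ W ∧ ∃ F ∈ H, F ⊆ {a, b} ∪ W ∧ ReachedFrom E W F a ∧ ReachedFrom E W F b := by
  simp only [MargH, Set.mem_ofPred_eq, Set.mem_insert_iff, Set.mem_singleton_iff,
    forall_eq_or_imp, forall_eq, ReachedFrom]
  constructor
  · rintro ⟨⟨ha, hb⟩, F, hF, hFab, hFa, hFb⟩
    exact ⟨ha, hb, F, hF, hFab, hFa.imp And.left id, hFb.imp And.left id⟩
  · rintro ⟨ha, hb, F, hF, hFab, hFa, hFb⟩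
    exact ⟨⟨ha, hb⟩, F, hF, hFab, hFa.imp (⟨·, ha⟩) id, hFb.imp (⟨·, hb⟩) id⟩

lemma reachedFrom_iff {F : Set V} {v : V} :
    ReachedFrom E W F v ↔ ∃ u ∈ F, ∃ l, IsWalk E H l u v ∧ IsRun W l ∧ (l ≠ [] → u ∈ W) := by
  constructor
  · rintro (hv | ⟨u, ⟨huF, huW⟩, huv⟩)
    · exact ⟨v, hv, [], rfl, ⟨by simp, .nil⟩, fun h => absurd rfl h⟩
    · obtain ⟨l, -, hl, hrun⟩ := huv.exists_run (H := H)
      exact ⟨u, huF, l, hl, hrun, fun _ => huW⟩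
  · rintro ⟨u, huF, l, hl, hrun, hu⟩
    rcases eq_or_ne l [] with rfl | hne
    · exact Or.inl (hl ▸ huF)
    · exact Or.inr ⟨u, ⟨huF, hu hne⟩, hrun.wPath hl hne⟩

lemma IsBiTrek.pair_mem_margH (hH : IsSimplicial H) {l : List (Step V)} {a b : V}
    (hl : IsWalk E H l a b) (hne : l ≠ []) (htrek : IsBiTrek W l) (ha : a ∉ W) (hb : b ∉ W) :
    ({a, b} : Set V) ∈ MargH E H W := by
  obtain ⟨hchain, hhead, hlast⟩ := htrek
  obtain ⟨B, t, R, rfl, hB, ht, hR⟩ :=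
    exists_eq_append_of_isChain_not_isCollider (hchain.imp fun _ _ h => h.2) hne hlast
  obtain ⟨_, hBw, rfl, htv, hRw⟩ := isWalk_append.1 hl
  obtain ⟨hBc, htRc, hjunc⟩ := List.isChain_append.1 hchain
  have hu : B ≠ [] → t.src ∈ W := fun hBne =>
    hBw.dst_of_mem_getLast? (List.getLast_mem_getLast? hBne) ▸
      (hjunc _ (List.getLast_mem_getLast? hBne) t rfl).1
  have hu' : R ≠ [] → t.dst ∈ W := fun hRne => (htRc.rel_head? (List.head_mem_head? hRne)).1
  have hBrun := hBw.isRun_reverse hB (hBc.imp fun _ _ h => h.1)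
  have hRrun : IsRun W R := ⟨hR, htRc.tail.imp fun _ _ h => h.1⟩
  have hFa : ∀ F, t.src ∈ F → ReachedFrom E W F a := fun F hF =>
    reachedFrom_iff.2 ⟨t.src, hF, reverseWalk B, hBw.reverse, hBrun, by simpa using hu⟩
  have hFb : ∀ F, t.dst ∈ F → ReachedFrom E W F b := fun F hF =>
    reachedFrom_iff.2 ⟨t.dst, hF, R, hRw, hRrun, hu'⟩
  refine pair_mem_margH_iff.2 ⟨ha, hb, ?_⟩
  cases hd : t.dir with
  | bwd => exact absurd ht (Step.not_headAtDst_iff.2 hd)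
  | fwd =>
    have hBne : B ≠ [] := by
      rintro rfl
      exact Step.not_headAtSrc_iff.2 hd (hhead t rfl)
    have huW := hu hBne
    have hwb : WPath E W t.src b := by
      have htE := htv.rel_of_dir_fwd hd
      rcases eq_or_ne R [] with rfl | hRne
      · exact .single (hRw ▸ htE)
      · exact (hRrun.wPath hRw hRne).head htE (hu' hRne)
    exact ⟨{t.src}, hH.1 _, by simp [huW], hFa _ rfl, Or.inr ⟨t.src, ⟨rfl, huW⟩, hwb⟩⟩
  | bi =>
    have htH : ({t.src, t.dst} : Set V) ∈ H := by
      unfold Step.Valid at htv; rw [hd] at htv; exact htv.2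
    refine ⟨_, htH, ?_, hFa _ (by simp), hFb _ (by simp)⟩
    rintro x (rfl | rfl)
    · rcases eq_or_ne B [] with rfl | hBne
      · exact Or.inl (Or.inl hBw.symm)
      · exact Or.inr (hu hBne)
    · rcases eq_or_ne R [] with rfl | hRne
      · exact Or.inl (Or.inr hRw)
      · exact Or.inr (hu' hRne)

lemma isBiTrek_reverseWalk_append {p q : List (Step V)} {u a : V} (hp : IsWalk E H p u a)
    (hprun : IsRun W p) (hpu : p ≠ [] → u ∈ W) (hqc : q.IsChain (PassesThrough W)) (hqne : q ≠ [])
    (hqhead : p = [] → ∀ h ∈ q.head?, h.HeadAtSrc) (hqlast : ∀ e ∈ q.getLast?, e.HeadAtDst) :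
    IsBiTrek W (reverseWalk p ++ q) := by
  have hpbwd : ∀ x ∈ reverseWalk p, x.dir = .bwd := fun _ => hprun.dir_of_mem_reverse
  refine ⟨List.isChain_append.2 ⟨hp.isChain_passesThrough_reverse hprun.isChain_passesThrough,
    hqc, fun x hx _ _ => ⟨?_, fun hc => ?_⟩⟩, ?_, ?_⟩
  · rw [hp.reverse.dst_of_mem_getLast? hx]
    exact hpu (by simpa using List.ne_nil_of_mem (List.mem_of_mem_getLast? hx))
  · exact Step.not_headAtDst_iff.2 (hpbwd x (List.mem_of_mem_getLast? hx)) hc.1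
  · rcases eq_or_ne p [] with rfl | hpne
    · simpa using hqhead rfl
    · rw [List.head?_append_of_ne_nil _ (by simpa using hpne)]
      exact fun x hx => Step.headAtSrc_of_dir_bwd (hpbwd x (List.mem_of_mem_head? hx))
  · rwa [List.getLast?_append_of_ne_nil _ hqne]

lemma exists_isBiTrek_of_pair_mem_margH (hH : IsSimplicial H) {a b : V} (hab : a ≠ b)
    (h : ({a, b} : Set V) ∈ MargH E H W) : ∃ l ≠ [], IsWalk E H l a b ∧ IsBiTrek W l := by
  obtain ⟨ha, hb, F, hF, -, hFa, hFb⟩ := pair_mem_margH_iff.1 h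
  obtain ⟨u, huF, p, hp, hprun, hpu⟩ := (reachedFrom_iff (H := H)).1 hFa
  obtain ⟨u', hu'F, q, hq, hqrun, hqu'⟩ := (reachedFrom_iff (H := H)).1 hFb
  have hqlast : ∀ e ∈ q.getLast?, e.HeadAtDst := fun e he =>
    Step.headAtDst_of_dir_fwd (hqrun.1 e (List.mem_of_mem_getLast? he))
  by_cases huu : u = u'
  · -- a fork `a ← ⋯ ← u → ⋯ → b`; neither side is empty as `a ≠ b` lie outside `W`
    subst huu
    have hpne : p ≠ [] := by
      rintro rfl
      rcases eq_or_ne q [] with rfl | hqne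
      · exact hab (hp.symm.trans hq)
      · exact ha (hp ▸ hqu' hqne)
    have hqne : q ≠ [] := by
      rintro rfl
      exact hb (hq ▸ hpu hpne)
    exact ⟨_, by simp [hqne], hp.reverse.append hq, isBiTrek_reverseWalk_append hp hprun hpu
      hqrun.isChain_passesThrough hqne (absurd · hpne) hqlast⟩
  · have hH' : ({u, u'} : Set V) ∈ H :=
      hH.2 F hF _ (Set.insert_subset huF (Set.singleton_subset_iff.2 hu'F))
    let m : Step V := ⟨u, .bi, u'⟩
    have hmq : (m :: q).IsChain (PassesThrough W) := hqrun.isChain_passesThrough.cons fun y hy =>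
      ⟨hqu' (List.ne_nil_of_mem (List.mem_of_mem_head? hy)),
        fun hc => Step.not_headAtSrc_iff.2 (hqrun.1 y (List.mem_of_mem_head? hy)) hc.2⟩
    refine ⟨reverseWalk p ++ m :: q, by simp, hp.reverse.append ⟨rfl, ⟨huu, hH'⟩, hq⟩,
      isBiTrek_reverseWalk_append hp hprun hpu hmq (by simp) (fun _ _ hx => ?_) ?_⟩
    · simp only [List.head?_cons, Option.mem_def, Option.some.injEq] at hx
      exact hx ▸ Or.inr rfl
    · rcases q with _ | ⟨r, q⟩
      · simp only [List.getLast?_singleton, Option.mem_def, Option.some.injEq]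
        exact fun _ hx => hx ▸ Or.inr rfl
      · rwa [List.getLast?_cons_cons]

end MargH

section Lift

variable {E : V → V → Prop} {H : Set (Set V)} {W Z : Set V}

lemma IsWalk.inSC_dst_of_mem_head? {l : List (Step V)} {a b : V} (hl : IsWalk E H l a b)
    (hfwd : ∀ s ∈ l, s.dir = .fwd) (hba : Reach E b a) {h : Step V} (hh : h ∈ l.head?) :
    InSC E a h.dst := by
  obtain ⟨l, rfl⟩ := List.head?_eq_some_iff.1 hh
  obtain ⟨rfl, hv, hl⟩ := hl
  exact ⟨.single (hv.rel_of_dir_fwd (hfwd h (by simp))),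
    (hl.reach_of_forall_fwd fun s hs => hfwd s (by simp [hs])).trans hba⟩

lemma exists_lift_of_margE (hWZ : ∀ w ∈ W, w ∉ Z) {a b : V} (h : MargE E W a b) :
    ∃ l ≠ [], IsWalk E H l a b ∧ l.IsChain (SigmaOpenAt E Z) ∧
      Replaces (MargE E W) E Z a b [⟨a, .fwd, b⟩] l := by
  obtain ⟨ha, hb, hab⟩ := h
  obtain ⟨l, hne, hl, hrun⟩ := WPath.exists_run (H := H) hab
  refine ⟨l, hne, hl, isChain_sigmaOpenAt_of_passesThrough hWZ hrun.isChain_passesThrough,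
    fun h hh => ⟨_, rfl, ?_, fun htail haZ _ => ?_⟩, fun e he => ⟨_, rfl, ?_⟩⟩
  · exact iff_of_false (Step.not_headAtSrc_iff.2 (hrun.1 h (List.mem_of_mem_head? hh)))
      (Step.not_headAtSrc_iff.2 rfl)
  · have hI := (inSC_margE_iff ha hb).1 (htail haZ (Step.not_headAtSrc_iff.2 rfl))
    exact hl.inSC_dst_of_mem_head? hrun.1 hI.2 hh
  · exact sameStart_flip_of_headAtDst (Or.inl rfl)
      (Step.headAtDst_of_dir_fwd (hrun.1 e (List.mem_of_mem_getLast? he)))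

lemma exists_lift_step (hH : IsSimplicial H) (hWZ : ∀ w ∈ W, w ∉ Z) {s : Step V}
    (hs : s.Valid (MargE E W) (MargH E H W)) :
    ∃ l ≠ [], IsWalk E H l s.src s.dst ∧ l.IsChain (SigmaOpenAt E Z) ∧
      Replaces (MargE E W) E Z s.src s.dst [s] l := by
  obtain ⟨a, d, b⟩ := s
  cases d with
  | fwd => exact exists_lift_of_margE hWZ hs
  | bwd =>
    obtain ⟨l, hne, hl, hopen, hrepl⟩ := exists_lift_of_margE (H := H) hWZ hs
    exact ⟨reverseWalk l, by simpa using hne, hl.reverse, hl.isChain_sigmaOpenAt_reverse hopen,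
      hrepl.reverse⟩
  | bi =>
    obtain ⟨l, hne, hl, hchain, hhead, hlast⟩ := exists_isBiTrek_of_pair_mem_margH hH hs.1 hs.2
    exact ⟨l, hne, hl, isChain_sigmaOpenAt_of_passesThrough hWZ hchain,
      fun h hh => ⟨_, rfl, sameStart_of_headAtSrc (Or.inr rfl) (hhead h hh)⟩,
      fun e he => ⟨_, rfl, sameStart_flip_of_headAtDst (Or.inr rfl) (hlast e he)⟩⟩

lemma exists_lift (hH : IsSimplicial H) (hWZ : ∀ w ∈ W, w ∉ Z) :
    ∀ {l' : List (Step V)} {a b : V}, IsWalk (MargE E W) (MargH E H W) l' a b →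
      l'.IsChain (SigmaOpenAt (MargE E W) Z) →
      ∃ l, IsWalk E H l a b ∧ l.IsChain (SigmaOpenAt E Z) ∧
        ∀ h ∈ l.head?, ∃ h' ∈ l'.head?, SameStart (MargE E W) E Z a h' h
  | [], _, _, hl', _ => ⟨[], hl', .nil, by simp⟩
  | s :: l', _, _, ⟨rfl, hs, hl'⟩, hopen => by
    obtain ⟨m, hne, hm, hmopen, hmhead, hmlast⟩ := exists_lift_step hH hWZ hs
    obtain ⟨l, hl, hlopen, hlhead⟩ := exists_lift hH hWZ hl' hopen.tail
    refine ⟨m ++ l, hm.append hl, List.isChain_append.2 ⟨hmopen, hlopen, fun e he h hh => ?_⟩,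
      by simpa [List.head?_append_of_ne_nil _ hne] using hmhead⟩
    obtain ⟨t, ht, hth⟩ := hlhead h hh
    have hse : SameStart (MargE E W) E Z s.dst s.flip e.flip := by simpa using hmlast e he
    exact (hopen.rel_head? ht).transfer hse hth (fun h => ancSet_margE_subset h)
      (hm.dst_of_mem_getLast? he)

end Lift

section Detour

variable {E : V → V → Prop} {H : Set (Set V)} {W Z : Set V}

/-- The detour `w → ⋯ → z ← ⋯ ← w` to the first node `z ∈ Z` on a directed path from `w`. -/
lemma exists_detour {w : V} (hw : w ∉ Z) (hanc : w ∈ AncSet E Z) :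
    ∃ D ≠ [], IsWalk E H D w w ∧ D.IsChain (SigmaOpenAt E Z) ∧
      D.IsChain (fun s t => IsCollider s t → s.dst ∈ Z) ∧
      (∀ h ∈ D.head?, ¬ h.HeadAtSrc) ∧ ∀ e ∈ D.getLast?, ¬ e.HeadAtDst := by
  obtain ⟨z, hz, hwz⟩ := hanc
  obtain ⟨z₀, hz₀, hwz₀, -⟩ := exists_wPath_of_reach (S := Zᶜ) hw (not_not.2 hz) hwz
  obtain ⟨d, hne, hd, hrun⟩ := WPath.exists_run (H := H) hwz₀
  have hdc := hrun.isChain_passesThrough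
  have hdne : reverseWalk d ≠ [] := by simpa using hne
  refine ⟨d ++ reverseWalk d, by simp [hne], hd.append hd.reverse,
    List.isChain_append.2 ⟨isChain_sigmaOpenAt_of_passesThrough (fun _ h => h) hdc,
      hd.isChain_sigmaOpenAt_reverse (isChain_sigmaOpenAt_of_passesThrough (fun _ h => h) hdc),
      fun x hx y hy => ?_⟩,
    List.isChain_append.2 ⟨hdc.imp fun _ _ h hc => absurd hc h.2,
      (hd.isChain_passesThrough_reverse hdc).imp fun _ _ h hc => absurd hc h.2,
      fun x hx _ _ _ => (hd.dst_of_mem_getLast? hx).symm ▸ not_not.1 hz₀⟩, ?_, ?_⟩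
  · rw [head?_reverseWalk, Option.mem_map] at hy
    obtain ⟨x', hx', rfl⟩ := hy
    obtain rfl := Option.mem_unique hx hx'
    exact sigmaOpenAt_flip_self (Step.headAtDst_of_dir_fwd (hrun.1 x (List.mem_of_mem_getLast? hx)))
      ⟨z₀, not_not.1 hz₀, hd.dst_of_mem_getLast? hx ▸ .refl⟩
  · rw [List.head?_append_of_ne_nil _ hne]
    exact fun h hh => Step.not_headAtSrc_iff.2 (hrun.1 h (List.mem_of_mem_head? hh))
  · rw [List.getLast?_append_of_ne_nil _ hdne]
    exact fun e he =>
      Step.not_headAtDst_iff.2 (hrun.dir_of_mem_reverse (List.mem_of_mem_getLast? he))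

lemma exists_walk_colliders_not_mem (hWZ : ∀ w ∈ W, w ∉ Z) :
    ∀ {l : List (Step V)} {a b : V}, IsWalk E H l a b → l.IsChain (SigmaOpenAt E Z) →
      ∃ l₂, IsWalk E H l₂ a b ∧ l₂.IsChain (SigmaOpenAt E Z) ∧
        l₂.IsChain (fun s t => IsCollider s t → s.dst ∉ W) ∧ l₂.head? = l.head?
  | [], _, _, hl, _ => ⟨[], hl, .nil, .nil, rfl⟩
  | s :: l, _, _, ⟨rfl, hs, hl⟩, hopen => by
    obtain ⟨l₂, hl₂, hopen₂, hcoll₂, hhead⟩ :=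
      exists_walk_colliders_not_mem hWZ hl hopen.tail
    have hjunc : ∀ t ∈ l₂.head?, SigmaOpenAt E Z s t := fun t ht =>
      hopen.rel_head? (hhead ▸ ht)
    by_cases hc : ∃ t ∈ l₂.head?, IsCollider s t ∧ s.dst ∈ W
    · obtain ⟨t, ht, hst, hsW⟩ := hc
      have hsZ := hWZ _ hsW
      obtain ⟨D, hDne, hD, hDopen, hDcoll, hDhead, hDlast⟩ :=
        exists_detour (H := H) hsZ ((hjunc t ht).1 hst)
      have hDl₂ : ∀ y ∈ (D ++ l₂).head?, ¬ IsCollider s y := by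
        rw [List.head?_append_of_ne_nil _ hDne]
        exact fun y hy hc => hDhead y hy hc.2
      have hDend : ∀ x ∈ D.getLast?, x.dst = s.dst ∧ ∀ y, ¬ IsCollider x y := fun x hx =>
        ⟨hD.dst_of_mem_getLast? hx, fun _ hc => hDlast x hx hc.1⟩
      refine ⟨s :: (D ++ l₂), ⟨rfl, hs, hD.append hl₂⟩, ?_, ?_, rfl⟩
      · refine List.IsChain.cons (List.isChain_append.2 ⟨hDopen, hopen₂, fun x hx y _ => ?_⟩)
          fun y hy => sigmaOpenAt_of_not_mem hsZ (hDl₂ y hy)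
        exact sigmaOpenAt_of_not_mem ((hDend x hx).1 ▸ hsZ) ((hDend x hx).2 y)
      · refine List.IsChain.cons (List.isChain_append.2 ⟨hDcoll.imp fun _ _ h hc hW =>
          hWZ _ hW (h hc), hcoll₂, fun x hx y _ hc => absurd hc ((hDend x hx).2 y)⟩)
          fun y hy hc => absurd hc (hDl₂ y hy)
    · push Not at hc
      exact ⟨s :: l₂, ⟨rfl, hs, hl₂⟩, hopen₂.cons hjunc, hcoll₂.cons hc, rfl⟩

end Detour

section Compress

variable {E : V → V → Prop} {H : Set (Set V)} {W Z : Set V}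

lemma IsWalk.exists_segment {l : List (Step V)} {a b : V} (hl : IsWalk E H l a b) (hb : b ∉ W)
    (hne : l ≠ []) :
    ∃ seg rest c, l = seg ++ rest ∧ seg ≠ [] ∧ c ∉ W ∧ IsWalk E H seg a c ∧
      IsWalk E H rest c b ∧ seg.IsChain (fun s _ => s.dst ∈ W) := by
  induction l generalizing a with
  | nil => exact absurd rfl hne
  | cons s l ih =>
    obtain ⟨rfl, hs, hl⟩ := hl
    by_cases hsW : s.dst ∈ W
    · have hlne : l ≠ [] := by rintro rfl; exact hb (hl ▸ hsW)
      obtain ⟨seg, rest, c, rfl, hsegne, hc, hseg, hrest, hsegW⟩ := ih hl hlne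
      exact ⟨s :: seg, rest, c, rfl, by simp, hc, ⟨rfl, hs, hseg⟩, hrest,
        hsegW.cons fun _ _ => hsW⟩
    · exact ⟨[s], l, s.dst, rfl, by simp, hsW, ⟨rfl, hs, rfl⟩, hl, .singleton _⟩

/-- `q` is the first node outside `W` on a directed path from `n` back to `a`. -/
lemma exists_margE_pair_mem_margH (hH : IsSimplicial H) {a n c : V} (ha : a ∉ W) (hc : c ∉ W)
    (han : E a n) (hnW : n ∈ W) (hnc : WPath E W n c) (hna : Reach E n a) (hca : ¬ Reach E c a) :
    ∃ q, MargE E W a q ∧ Reach (MargE E W) q a ∧ q ≠ c ∧ ({q, c} : Set V) ∈ MargH E H W := by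
  obtain ⟨q, hq, hnq, hqa⟩ := exists_wPath_of_reach hnW ha hna
  refine ⟨q, ⟨ha, hq, hnq.head han hnW⟩, hqa.margE hq ha, by rintro rfl; exact hca hqa,
    pair_mem_margH_iff.2 ⟨hq, hc, {n}, hH.1 _, by simp [hnW], ?_, ?_⟩⟩
  · exact Or.inr ⟨n, ⟨rfl, hnW⟩, hnq⟩
  · exact Or.inr ⟨n, ⟨rfl, hnW⟩, hnc⟩

lemma exists_margWalk_of_isRun (hH : IsSimplicial H) {l : List (Step V)} {a c : V}
    (hl : IsWalk E H l a c) (hne : l ≠ []) (hrun : IsRun W l) (ha : a ∉ W) (hc : c ∉ W) :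
    ∃ l' ≠ [], IsWalk (MargE E W) (MargH E H W) l' a c ∧
      l'.IsChain (SigmaOpenAt (MargE E W) Z) ∧ Replaces E (MargE E W) Z a c l l' := by
  have hlast : ∀ e' : Step V, e'.HeadAtDst →
      ∃ e ∈ l.getLast?, SameStart E (MargE E W) Z c e.flip e'.flip := fun _ he' =>
    ⟨_, List.getLast_mem_getLast? hne, sameStart_flip_of_headAtDst
      (Step.headAtDst_of_dir_fwd (hrun.1 _ (List.getLast_mem hne))) he'⟩
  have hac : WPath E W a c := hrun.wPath hl hne
  obtain ⟨s, l, rfl⟩ := List.exists_cons_of_ne_nil hne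
  obtain ⟨rfl, hs, hl⟩ := hl
  have hsfwd : s.dir = .fwd := hrun.1 s (by simp)
  have hhead : ∀ b, (TailCond E Z s.src s → TailCond (MargE E W) Z s.src ⟨s.src, .fwd, b⟩) →
      ∃ h ∈ (s :: l).head?, SameStart E (MargE E W) Z s.src h ⟨s.src, .fwd, b⟩ := fun _ ht =>
    ⟨s, rfl, iff_of_false (Step.not_headAtSrc_iff.2 rfl) (Step.not_headAtSrc_iff.2 hsfwd), ht⟩
  by_cases hfix : s.src ∈ Z ∧ Reach E s.dst s.src ∧ ¬ Reach E c s.src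
  · obtain ⟨haZ, hna, hnc⟩ := hfix
    have hlne : l ≠ [] := by rintro rfl; exact hnc (hl ▸ hna)
    have hnW : s.dst ∈ W := (List.isChain_cons.1 hrun.2).1 _ (List.head_mem_head? hlne)
    have hrun' : IsRun W l := ⟨fun x hx => hrun.1 x (by simp [hx]), hrun.2.tail⟩
    obtain ⟨q, haq, hqa, hqc, hqcH⟩ := exists_margE_pair_mem_margH hH ha hc
      (hs.rel_of_dir_fwd hsfwd) hnW (hrun'.wPath hl hlne) hna hnc
    exact ⟨[⟨s.src, .fwd, q⟩, ⟨q, .bi, c⟩], by simp, ⟨rfl, haq, rfl, ⟨hqc, hqcH⟩, rfl⟩,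
      List.isChain_pair.2 ⟨fun _ => ⟨s.src, haZ, hqa⟩, fun _ h => absurd (Or.inl rfl) h,
        fun _ h => absurd (Or.inr rfl) h⟩,
      .of_head?_getLast? rfl rfl (hhead q fun _ _ _ => ⟨.single haq, hqa⟩) (hlast _ (Or.inr rfl))⟩
  · refine ⟨[⟨s.src, .fwd, c⟩], by simp, ⟨rfl, ⟨ha, hc, hac⟩, rfl⟩, .singleton _,
      .of_head?_getLast? rfl rfl (hhead c fun htail haZ _ => ?_) (hlast _ (Or.inl rfl))⟩
    have hsn := htail haZ (Step.not_headAtSrc_iff.2 hsfwd)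
    exact (inSC_margE_iff ha hc).2 ⟨hac.reach, by_contra fun h => hfix ⟨haZ, hsn.2, h⟩⟩

lemma exists_margWalk_of_segment (hH : IsSimplicial H) {l : List (Step V)} {a c : V}
    (hl : IsWalk E H l a c) (hne : l ≠ []) (hchain : l.IsChain (PassesThrough W)) (ha : a ∉ W)
    (hc : c ∉ W) :
    (a = c ∧ ∀ h ∈ l.head?, h.HeadAtSrc) ∨
      ∃ l' ≠ [], IsWalk (MargE E W) (MargH E H W) l' a c ∧
        l'.IsChain (SigmaOpenAt (MargE E W) Z) ∧ Replaces E (MargE E W) Z a c l l' := by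
  rcases isRun_or_isRun_reverse_or_isBiTrek hl hchain with hrun | hrun | htrek
  · exact Or.inr (exists_margWalk_of_isRun hH hl hne hrun ha hc)
  · obtain ⟨l', hne', hl', hopen', hrepl⟩ :=
      exists_margWalk_of_isRun (Z := Z) hH hl.reverse (by simpa using hne) hrun hc ha
    exact Or.inr ⟨reverseWalk l', by simpa using hne', hl'.reverse,
      hl'.isChain_sigmaOpenAt_reverse hopen', by simpa using hrepl.reverse⟩
  · rcases eq_or_ne a c with rfl | hac
    · exact Or.inl ⟨rfl, htrek.2.1⟩
    exact Or.inr ⟨[⟨a, .bi, c⟩], by simp, ⟨rfl, ⟨hac, htrek.pair_mem_margH hH hl hne ha hc⟩, rfl⟩,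
      .singleton _, .of_head?_getLast? rfl rfl
        ⟨_, List.head_mem_head? hne,
          sameStart_of_headAtSrc (htrek.2.1 _ (List.head_mem_head? hne)) (Or.inr rfl)⟩
        ⟨_, List.getLast_mem_getLast? hne,
          sameStart_flip_of_headAtDst (htrek.2.2 _ (List.getLast_mem_getLast? hne)) (Or.inr rfl)⟩⟩

/-- The prefix `P` is already compressed; the induction carries it because a segment
`a ← ⋯ → a` is deleted rather than replaced. -/
lemma exists_margWalk (hH : IsSimplicial H) (hWZ : ∀ w ∈ W, w ∉ Z) {l P : List (Step V)}
    {x a b : V} (hP : IsWalk (MargE E W) (MargH E H W) P x a)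
    (hPopen : P.IsChain (SigmaOpenAt (MargE E W) Z)) (hl : IsWalk E H l a b)
    (hlopen : l.IsChain (SigmaOpenAt E Z))
    (hlcoll : l.IsChain (fun s t => IsCollider s t → s.dst ∉ W)) (ha : a ∉ W) (hb : b ∉ W)
    (hjunc : ∀ p ∈ P.getLast?, ∀ h ∈ l.head?, ∃ e : Step V, e.dst = a ∧
      SigmaOpenAt E Z e h ∧ SameStart E (MargE E W) Z a e.flip p.flip) :
    ∃ l', IsWalk (MargE E W) (MargH E H W) l' x b ∧ l'.IsChain (SigmaOpenAt (MargE E W) Z) := by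
  rcases eq_or_ne l [] with rfl | hne
  · exact ⟨P, hl ▸ hP, hPopen⟩
  obtain ⟨seg, rest, c, hl_eq, hsegne, hc, hseg, hrest, hsegW⟩ := hl.exists_segment hb hne
  rw [hl_eq] at hlopen hlcoll hjunc
  obtain ⟨-, hrestopen, hjopen⟩ := List.isChain_append.1 hlopen
  obtain ⟨hsegcoll, hrestcoll, -⟩ := List.isChain_append.1 hlcoll
  have hsegchain : seg.IsChain (PassesThrough W) :=
    (isChain_and hsegW hsegcoll).imp fun _ _ h => ⟨h.1, fun hc => h.2 hc h.1⟩
  have hhead : ∀ h ∈ seg.head?, h ∈ (seg ++ rest).head? := by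
    rw [List.head?_append_of_ne_nil _ hsegne]; exact fun _ => id
  rcases exists_margWalk_of_segment (Z := Z) hH hseg hsegne hsegchain ha hc with
    ⟨rfl, hloop⟩ | ⟨ms, hmsne, hms, hmsopen, hmshead, hmslast⟩
  · refine exists_margWalk hH hWZ hP hPopen hrest hrestopen hrestcoll ha hb fun p hp h hh => ?_
    obtain ⟨e, he, heopen, hep⟩ := hjunc p hp _ (hhead _ (List.head_mem_head? hsegne))
    refine ⟨e, he, heopen.skip (hjopen _ (List.getLast_mem_getLast? hsegne) h hh)
      (hloop _ (List.head_mem_head? hsegne)) ?_, hep⟩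
    rw [he, hseg.dst_of_mem_getLast? (List.getLast_mem_getLast? hsegne)]
  · refine exists_margWalk hH hWZ (hP.append hms)
      (List.isChain_append.2 ⟨hPopen, hmsopen, fun p hp h' hh' => ?_⟩) hrest hrestopen hrestcoll hc
      hb fun p hp h hh => ?_
    · obtain ⟨g, hg, hgh'⟩ := hmshead h' hh'
      obtain ⟨e, rfl, heopen, hep⟩ := hjunc p hp g (hhead g hg)
      exact heopen.transfer hep hgh' (mem_ancSet_margE hWZ ha) (hP.dst_of_mem_getLast? hp)
    · rw [List.getLast?_append_of_ne_nil _ hmsne] at hp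
      obtain ⟨e, he, hep⟩ := hmslast p hp
      exact ⟨e, hseg.dst_of_mem_getLast? he, hjopen e he h hh, hep⟩
termination_by l.length
decreasing_by all_goals simpa [hl_eq] using List.length_pos_iff.2 hsegne

end Compress

theorem sigmaSep_marginalization_general {V : Type*}
    (E : V → V → Prop) (H : Set (Set V)) (hH : IsSimplicial H)
    (W X Y Z : Set V) (hW : (X ∪ Y ∪ Z) ∩ W = ∅) :
    SigmaSep E H X Y Z ↔ SigmaSep (MargE E W) (MargH E H W) X Y Z := by
  have hdisj : ∀ v ∈ X ∪ Y ∪ Z, v ∉ W := fun v hv hvW =>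
    (Set.eq_empty_iff_forall_notMem.1 hW) v ⟨hv, hvW⟩
  have hWZ : ∀ w ∈ W, w ∉ Z := fun w hw hz => hdisj w (Or.inr hz) hw
  simp only [SigmaSep, sigmaInteriorOpen_iff]
  constructor
  · rintro hsep x hx y hy l' hl' ⟨hxZ, hyZ, hopen'⟩
    obtain ⟨l, hl, hopen, -⟩ := exists_lift hH hWZ hl' hopen'
    exact hsep x hx y hy l hl ⟨hxZ, hyZ, hopen⟩
  · rintro hsep x hx y hy l hl ⟨hxZ, hyZ, hopen⟩
    obtain ⟨l₁, hl₁, hopen₁, hcoll₁, -⟩ := exists_walk_colliders_not_mem hWZ hl hopen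
    obtain ⟨l', hl', hopen'⟩ := exists_margWalk (P := []) hH hWZ rfl .nil hl₁ hopen₁ hcoll₁
      (hdisj x (Or.inl (Or.inl hx))) (hdisj y (Or.inl (Or.inr hy))) (by simp)
    exact hsep x hx y hy l' hl' ⟨hxZ, hyZ, hopen'⟩

/-- σ-separation in a HEDG is stable under marginalization: for
`(X ∪ Y ∪ Z) ∩ W = ∅`, `X ⟂_G^σ Y | Z` iff `X ⟂_{G^{marg∖W}}^σ Y | Z`. -/
theorem sigmaSep_marginalization {V : Type*} [Fintype V]
    (E : V → V → Prop) (H : Set (Set V)) (hH : IsSimplicial H)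
    (W X Y Z : Set V) (hW : (X ∪ Y ∪ Z) ∩ W = ∅) :
    SigmaSep E H X Y Z ↔ SigmaSep (MargE E W) (MargH E H W) X Y Z :=
  sigmaSep_marginalization_general E H hH W X Y Z hW

end HedgPaper
end

section
/- In a HEDG, if every strongly connected component S lies entirely within a single district of its ancestral closure Anc^G(S), then every pseudo-topological order of G is a perfect elimination order (hence a quasi-topological order). -/
namespace HedgPaper

variable {V : Type*}

/-! A pseudo-topological order puts every marginal child of `v` inside `Pred(v)` into the
strongly connected component of `v`. By hypothesis that component lies in one district of
`Anc(v)`, and bidirected chains through ancestors of `v` survive marginalization, because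
each node can be replaced by the first node outside the marginalized set on a directed
path towards `v`. So in `A^moral` every neighbour of `v` is a parent-or-self of a node in
the district of `v`, and any two such nodes are moral neighbours. -/

instance (H : Set (Set V)) : Std.Symm (BiRel H) where
  symm _ _ h := ⟨h.1.symm, Set.pair_comm _ _ ▸ h.2⟩

lemma moralE_of_mem_closedNbhd {E : V → V → Prop} {H : Set (Set V)} {v : V}
    (hchild : ∀ p, E v p → Relation.ReflTransGen (BiRel H) v p) {a b : V}
    (ha : a ∈ insert v {w | MoralE E H v w}) (hb : b ∈ insert v {w | MoralE E H v w})
    (hab : a ≠ b) : MoralE E H a b := by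
  have toDistrict : ∀ w ∈ insert v {w | MoralE E H v w},
      ∃ q, (w = q ∨ E w q) ∧ Relation.ReflTransGen (BiRel H) v q := by
    rintro w (rfl | ⟨-, p, q, hvp | hvp, hwq, hpq⟩)
    · exact ⟨w, Or.inl rfl, .refl⟩
    · exact ⟨q, hwq, hvp ▸ hpq⟩
    · exact ⟨q, hwq, (hchild p hvp).trans hpq⟩
  obtain ⟨qa, hqa, hva⟩ := toDistrict a ha
  obtain ⟨qb, hqb, hvb⟩ := toDistrict b hb
  exact ⟨hab, qa, qb, hqa, hqb, (Std.Symm.symm _ _ hva).trans hvb⟩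

/-- `z` stands in for `y` in the marginalization over `U`: `y` itself if it survives, otherwise
a survivor reached from `y` by a directed path through `U`. -/
def MargRep (E : V → V → Prop) (U : Set V) (y z : V) : Prop :=
  (y ∉ U ∧ z = y) ∨
  (y ∈ U ∧ z ∉ U ∧ ∃ c, Relation.ReflTransGen (fun a b => E a b ∧ b ∈ U) y c ∧ E c z)

lemma MargRep.not_mem {E : V → V → Prop} {U : Set V} {y z : V} (h : MargRep E U y z) :
    z ∉ U := by
  rcases h with ⟨hy, rfl⟩ | ⟨-, hz, -⟩ <;> assumption

lemma exists_margRep_of_reach {E : V → V → Prop} {U : Set V} {y v : V}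
    (hy : Reach E y v) (hv : v ∉ U) : ∃ z, MargRep E U y z := by
  induction hy using Relation.ReflTransGen.head_induction_on with
  | refl => exact ⟨v, .inl ⟨hv, rfl⟩⟩
  | @head y m hym _ ih =>
    by_cases hyU : y ∈ U
    · by_cases hmU : m ∈ U
      · obtain ⟨z, ⟨hmU', -⟩ | ⟨-, hz, c, hmc, hcz⟩⟩ := ih
        · exact absurd hmU hmU'
        · exact ⟨z, .inr ⟨hyU, hz, c, .head ⟨hym, hmU⟩ hmc, hcz⟩⟩
      · exact ⟨m, .inr ⟨hyU, hmU, y, .refl, hym⟩⟩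
    · exact ⟨y, .inl ⟨hyU, rfl⟩⟩

lemma MargRep.eq_or_biRel {E : V → V → Prop} {H : Set (Set V)} {U : Set V}
    {x y zx zy : V} (hxy : BiRel H x y) (hx : MargRep E U x zx) (hy : MargRep E U y zy) :
    zx = zy ∨ BiRel (MargH E H U) zx zy := by
  refine or_iff_not_imp_left.2 fun hne => ⟨hne, ?_, {x, y}, hxy.2, ?_, ?_⟩
  · rintro w (rfl | rfl)
    exacts [hx.not_mem, hy.not_mem]
  · rintro w (rfl | rfl)
    · rcases hx with ⟨-, rfl⟩ | ⟨hxU, -⟩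
      exacts [.inl (.inl rfl), .inr hxU]
    · rcases hy with ⟨-, rfl⟩ | ⟨hyU, -⟩
      exacts [.inl (.inr rfl), .inr hyU]
  · rintro w (rfl | rfl)
    · rcases hx with ⟨hxU, rfl⟩ | ⟨hxU, -, c, hxc, hcw⟩
      exacts [.inl ⟨.inl rfl, hxU⟩, .inr ⟨x, ⟨.inl rfl, hxU⟩, c, hxc, hcw⟩]
    · rcases hy with ⟨hyU, rfl⟩ | ⟨hyU, -, c, hyc, hcw⟩
      exacts [.inl ⟨.inr rfl, hyU⟩, .inr ⟨y, ⟨.inr rfl, hyU⟩, c, hyc, hcw⟩]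

lemma biRel_margH_chain_of_ancestral_chain {E : V → V → Prop} {H : Set (Set V)}
    {U : Set V} {v x p zx : V} (hv : v ∉ U) (hp : p ∉ U)
    (hchain : Relation.ReflTransGen
      (fun x y => x ≠ y ∧ ({x, y} : Set V) ∈ H ∧ Reach E x v ∧ Reach E y v) x p)
    (hx : MargRep E U x zx) :
    Relation.ReflTransGen (BiRel (MargH E H U)) zx p := by
  induction hchain using Relation.ReflTransGen.head_induction_on generalizing zx with
  | refl =>
    rcases hx with ⟨-, rfl⟩ | ⟨hpU, -⟩
    exacts [.refl, absurd hpU hp]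
  | @head x y hxy _ ih =>
    obtain ⟨hne, hxyH, -, hyv⟩ := hxy
    obtain ⟨zy, hy⟩ := exists_margRep_of_reach hyv hv
    rcases MargRep.eq_or_biRel ⟨hne, hxyH⟩ hx hy with rfl | hbi
    exacts [ih hy, .head hbi (ih hy)]

lemma reach_of_margE {E : V → V → Prop} {U : Set V} {a b : V} (h : MargE E U a b) :
    Reach E a b := by
  obtain ⟨-, -, c, hac, hcb⟩ := h
  exact (Relation.ReflTransGen.mono (fun _ _ hxy => hxy.1) _ _ hac).tail hcb

lemma inSC_of_reach_of_le [LinearOrder V] {E : V → V → Prop} {v p : V}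
    (hpt : ∀ v w : V, Reach E w v → ¬ InSC E w v → w < v)
    (hvp : Reach E v p) (hpv : p ≤ v) : InSC E v p := by
  by_contra hnsc
  exact (hpt p v hvp hnsc).not_ge hpv

theorem pseudoTopological_is_perfectElimination_general {V : Type*} [LinearOrder V]
    (E : V → V → Prop) (H : Set (Set V))
    (hdistrict : ∀ v w : V, InSC E v w →
      Relation.ReflTransGen
        (fun x y => x ≠ y ∧ ({x, y} : Set V) ∈ H ∧ Reach E x v ∧ Reach E y v) v w)
    (hpt : ∀ v w : V, Reach E w v → ¬ InSC E w v → w < v) :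
    ∀ v : V, ∀ A : Set V, v ∈ A → A ⊆ {w | w ≤ v} →
      (∀ a ∈ A, ∀ u : V, Relation.ReflTransGen (MargE E {w | ¬ w ≤ v}) u a → u ∈ A) →
      ∀ a b : V,
        a ∈ insert v {w | MoralE (MargE E Aᶜ) (MargH E H Aᶜ) v w} →
        b ∈ insert v {w | MoralE (MargE E Aᶜ) (MargH E H Aᶜ) v w} →
        a ≠ b → MoralE (MargE E Aᶜ) (MargH E H Aᶜ) a b := by
  intro v A hvA hAle _ a b ha hb hab
  have hvA' : v ∉ Aᶜ := not_not.mpr hvA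
  refine moralE_of_mem_closedNbhd (fun p hvp => ?_) ha hb hab
  have hpv : p ≤ v := hAle (not_not.mp hvp.2.1)
  have hsc : InSC E v p := inSC_of_reach_of_le hpt (reach_of_margE hvp) hpv
  exact biRel_margH_chain_of_ancestral_chain hvA' hvp.2.1 (hdistrict v p hsc) (.inl ⟨hvA', rfl⟩)

/-- If in a HEDG every strongly connected component `S` lies entirely
within a single district of its ancestral closure `Anc^G(S)`, then every
pseudo-topological total order of `G` is a perfect elimination order: for every node `v`
and every ancestral subset `A` of the marginalization of `G` onto the predecessors of
`v` with `v ∈ A`, the set `∂_{A^moral}(v) ∪ {v}` is a complete subgraph of `A^moral`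
(where `A` carries the marginalized HEDG structure). -/
theorem pseudoTopological_is_perfectElimination {V : Type*} [Fintype V] [LinearOrder V]
    (E : V → V → Prop) (H : Set (Set V)) (hH : IsSimplicial H)
    (hdistrict : ∀ v w : V, InSC E v w →
      Relation.ReflTransGen
        (fun x y => x ≠ y ∧ ({x, y} : Set V) ∈ H ∧ Reach E x v ∧ Reach E y v) v w)
    (hpt : ∀ v w : V, Reach E w v → ¬ InSC E w v → w < v) :
    ∀ v : V, ∀ A : Set V, v ∈ A → A ⊆ {w | w ≤ v} →
      (∀ a ∈ A, ∀ u : V, Relation.ReflTransGen (MargE E {w | ¬ w ≤ v}) u a → u ∈ A) →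
      ∀ a b : V,
        a ∈ insert v {w | MoralE (MargE E Aᶜ) (MargH E H Aᶜ) v w} →
        b ∈ insert v {w | MoralE (MargE E Aᶜ) (MargH E H Aᶜ) v w} →
        a ≠ b → MoralE (MargE E Aᶜ) (MargH E H Aᶜ) a b :=
  pseudoTopological_is_perfectElimination_general E H hdistrict hpt

end HedgPaper
end
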